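/- arXiv:1712.00837 — 2 statements merged into one kernel-verified Lean document; each statement's English description precedes it below -/
import Mathlib

section
/- There exist infinitely many pairwise non-isomorphic atomic Puiseux monoids P such that 0 is not a limit point of P and ρ_k(P) = ∞ for every k ≥ 2. -/
/-- A Puiseux monoid: an additive submonoid of ℚ consisting of nonnegative rationals. -/
def PM.Puiseux (P : AddSubmonoid ℚ) : Prop := ∀ x ∈ P, 0 ≤ x

/-- `a` is an atom of `P`. -/
def PM.IsAtom (P : AddSubmonoid ℚ) (a : ℚ) : Prop :=
  a ∈ P ∧ a ≠ 0 ∧ ∀ x ∈ P, ∀ y ∈ P, a = x + y → x = 0 ∨ y = 0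

/-- A factorization of `x` is a multiset of atoms of `P` summing to `x`. -/
def PM.IsFactorization (P : AddSubmonoid ℚ) (x : ℚ) (z : Multiset ℚ) : Prop :=
  (∀ a ∈ z, PM.IsAtom P a) ∧ z.sum = x

/-- The set of lengths of `x`. -/
def PM.Lengths (P : AddSubmonoid ℚ) (x : ℚ) : Set ℕ :=
  {n | ∃ z : Multiset ℚ, PM.IsFactorization P x z ∧ Multiset.card z = n}

/-- `P` is atomic: it is generated by its set of atoms. -/
def PM.Atomic (P : AddSubmonoid ℚ) : Prop :=
  AddSubmonoid.closure {a | PM.IsAtom P a} = P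

/-- The union of sets of lengths `U_k(P)`. -/
def PM.U (P : AddSubmonoid ℚ) (k : ℕ) : Set ℕ :=
  {l | ∃ x ∈ P, k ∈ PM.Lengths P x ∧ l ∈ PM.Lengths P x}

/-!
For a prime `p`, let `P_p` be generated by `1` and, for `m ≥ 1`, by `m + p⁻ᵐ` and `m + 1 - p⁻ᵐ`.
All generators are `≥ 1`, so every nonzero element is `≥ 1`. A generator `g` of index `m` lies
in `(m, m + 1)`; if `g = x + y` with `x, y ≥ 1`, then `x, y < m`, so only generators of index
`< m` occur in them and `x + y ∈ p^{-(m-1)} ℤ`, whereas `g ∉ p^{-(m-1)} ℤ`. Hence the generators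
are atoms. The element `(k - 2) + (2m + 1)` factors both as `k - 2` ones plus
`(m + p⁻ᵐ) + (m + 1 - p⁻ᵐ)` and as ones only, so `U_k(P_p)` is infinite.
An isomorphism of submonoids of `ℚ` is multiplication by a constant `c`, and if both contain `1`
as their least nonzero element then `c = 1`; thus `P_p ≅ P_q` forces `1 + p⁻¹ ∈ P_q`, i.e.
`p ∣ q^e`, so `p = q`.
-/

namespace PM

variable {P : AddSubmonoid ℚ}

lemma atomic_closure {s : Set ℚ} (hs : ∀ a ∈ s, IsAtom (AddSubmonoid.closure s) a) :
    Atomic (AddSubmonoid.closure s) :=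
  le_antisymm (AddSubmonoid.closure_le.2 fun _ ha => ha.1) (AddSubmonoid.closure_mono hs)

lemma IsFactorization.mem {x : ℚ} {z : Multiset ℚ} (h : IsFactorization P x z) : x ∈ P :=
  h.2 ▸ P.multiset_sum_mem z fun a ha => (h.1 a ha).1

lemma IsFactorization.add {x y : ℚ} {z w : Multiset ℚ} (hz : IsFactorization P x z)
    (hw : IsFactorization P y w) : IsFactorization P (x + y) (z + w) :=
  ⟨fun a ha => (Multiset.mem_add.1 ha).elim (hz.1 a) (hw.1 a), by rw [Multiset.sum_add, hz.2, hw.2]⟩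

lemma isFactorization_replicate {a : ℚ} (ha : IsAtom P a) (n : ℕ) :
    IsFactorization P (n * a) (Multiset.replicate n a) :=
  ⟨fun _ hb => Multiset.eq_of_mem_replicate hb ▸ ha, by rw [Multiset.sum_replicate, nsmul_eq_mul]⟩

lemma isFactorization_pair {a b : ℚ} (ha : IsAtom P a) (hb : IsAtom P b) :
    IsFactorization P (a + b) {a, b} :=
  ⟨by simp only [Multiset.insert_eq_cons, Multiset.mem_cons, Multiset.mem_singleton]
      rintro c (rfl | rfl) <;> assumption,
    by simp⟩

lemma add_mem_U_of_atoms {a b : ℚ} {n k : ℕ} (h1 : IsAtom P 1) (ha : IsAtom P a)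
    (hb : IsAtom P b) (hab : a + b = n) (hk : 2 ≤ k) : k - 2 + n ∈ U P k := by
  have hshort : IsFactorization P ((k - 2 : ℕ) + n) (Multiset.replicate (k - 2) 1 + {a, b}) := by
    simpa [hab] using (isFactorization_replicate h1 (k - 2)).add (isFactorization_pair ha hb)
  have hlong := isFactorization_replicate h1 (k - 2 + n)
  rw [mul_one, Nat.cast_add] at hlong
  refine ⟨_, hlong.mem, ⟨_, hshort, ?_⟩, ⟨_, hlong, Multiset.card_replicate _ _⟩⟩
  simp only [Multiset.card_add, Multiset.card_replicate, Multiset.insert_eq_cons,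
    Multiset.card_cons, Multiset.card_singleton]
  omega

lemma puiseux_of_eq_zero_or_one_le (hP : ∀ x ∈ P, x = 0 ∨ 1 ≤ x) : Puiseux P := fun x hx =>
  (hP x hx).elim (fun h => h.ge) fun h => zero_le_one.trans h

lemma addMonoidHom_apply_eq_mul {S T : AddSubmonoid ℚ} (hS : Puiseux S) (h1 : (1 : ℚ) ∈ S)
    (f : S →+ T) (x : S) : (f x : ℚ) = f ⟨1, h1⟩ * x := by
  have hnum : ((x : ℚ).num.toNat : ℚ) = (x : ℚ).num :=
    by exact_mod_cast Int.toNat_of_nonneg (Rat.num_nonneg.2 (hS x x.2))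
  -- `den • x = num • 1` inside `S`, and `f` commutes with `ℕ`-multiples
  have hsmul : (x : ℚ).den • x = (x : ℚ).num.toNat • (⟨1, h1⟩ : S) := by
    ext
    simp only [AddSubmonoidClass.coe_nsmul, nsmul_eq_mul, mul_one, hnum]
    rw [mul_comm, Rat.mul_den_eq_num]
  have := congrArg (fun y : S => ((f y : T) : ℚ)) hsmul
  simp only [map_nsmul, AddSubmonoidClass.coe_nsmul, nsmul_eq_mul, hnum] at this
  have hden : ((x : ℚ).den : ℚ) ≠ 0 := by positivity
  apply mul_left_cancel₀ hden
  rw [this, ← Rat.mul_den_eq_num]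
  ring

lemma one_le_coe_addEquiv_one {S T : AddSubmonoid ℚ} (hT : ∀ x ∈ T, x = 0 ∨ 1 ≤ x)
    (h1 : (1 : ℚ) ∈ S) (e : S ≃+ T) : 1 ≤ (e ⟨1, h1⟩ : ℚ) := by
  refine (hT _ (e _).2).resolve_left fun h0 => ?_
  have : (⟨1, h1⟩ : S) = 0 := e.injective (by ext; simp at h0)
  exact one_ne_zero (congrArg Subtype.val this)

lemma le_of_addEquiv {S T : AddSubmonoid ℚ} (hS : ∀ x ∈ S, x = 0 ∨ 1 ≤ x)
    (hT : ∀ x ∈ T, x = 0 ∨ 1 ≤ x) (hS1 : (1 : ℚ) ∈ S) (hT1 : (1 : ℚ) ∈ T) (e : S ≃+ T) :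
    S ≤ T := by
  -- `e` and `e.symm` are multiplications by `c` and `t` with `t * c = 1` and `c, t ≥ 1`, so `c = 1`
  have hmul (x : S) : (e x : ℚ) = (e ⟨1, hS1⟩ : ℚ) * x :=
    addMonoidHom_apply_eq_mul (puiseux_of_eq_zero_or_one_le hS) hS1 e.toAddMonoidHom x
  have hct : (e.symm ⟨1, hT1⟩ : ℚ) * (e ⟨1, hS1⟩ : ℚ) = 1 := by
    simpa using (addMonoidHom_apply_eq_mul (puiseux_of_eq_zero_or_one_le hT) hT1
      e.symm.toAddMonoidHom (e ⟨1, hS1⟩)).symm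
  have hc1 : (e ⟨1, hS1⟩ : ℚ) = 1 := by
    nlinarith [one_le_coe_addEquiv_one hT hS1 e, one_le_coe_addEquiv_one hS hT1 e.symm]
  intro x hx
  have hx' := (e ⟨x, hx⟩).2
  rwa [hmul, hc1, one_mul] at hx'

end PM

namespace PuiseuxExample

open AddSubgroup

def atomA (p m : ℕ) : ℚ := m + ((p : ℚ) ^ m)⁻¹

def atomB (p m : ℕ) : ℚ := m + 1 - ((p : ℚ) ^ m)⁻¹

def gens (p : ℕ) : Set ℚ := {x | x = 1 ∨ ∃ m, 1 ≤ m ∧ (x = atomA p m ∨ x = atomB p m)}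

def monoid (p : ℕ) : AddSubmonoid ℚ := AddSubmonoid.closure (gens p)

variable {p q : ℕ}

lemma lt_and_lt_add_one_of_eq_atom (hp : 2 ≤ p) {m : ℕ} (hm : 1 ≤ m) {g : ℚ}
    (hg : g = atomA p m ∨ g = atomB p m) : m < g ∧ g < m + 1 := by
  have hpos : 0 < ((p : ℚ) ^ m)⁻¹ := by positivity
  have hlt : ((p : ℚ) ^ m)⁻¹ < 1 :=
    inv_lt_one_of_one_lt₀ (one_lt_pow₀ (by exact_mod_cast hp) (by omega))
  rcases hg with rfl | rfl <;> constructor <;> simp only [atomA, atomB] <;> linarith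

lemma one_le_of_mem_gens (hp : 2 ≤ p) {g : ℚ} (hg : g ∈ gens p) : 1 ≤ g := by
  rcases hg with rfl | ⟨m, hm, hg⟩
  · exact le_rfl
  · have : (1 : ℚ) ≤ m := by exact_mod_cast hm
    linarith [(lt_and_lt_add_one_of_eq_atom hp hm hg).1]

lemma eq_zero_or_one_le_of_mem (hp : 2 ≤ p) {x : ℚ} (hx : x ∈ monoid p) : x = 0 ∨ 1 ≤ x := by
  induction hx using AddSubmonoid.closure_induction with
  | mem g hg => exact .inr (one_le_of_mem_gens hp hg)
  | zero => exact .inl rfl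
  | add x y _ _ hx hy =>
    rcases hx with rfl | hx
    · simpa using hy
    · rcases hy with rfl | hy <;> right <;> linarith

lemma one_mem_monoid : (1 : ℚ) ∈ monoid p := AddSubmonoid.subset_closure (.inl rfl)

lemma puiseux (hp : 2 ≤ p) : PM.Puiseux (monoid p) :=
  PM.puiseux_of_eq_zero_or_one_le fun _ => eq_zero_or_one_le_of_mem hp

lemma inv_pow_mem_zmultiples (hp : p ≠ 0) {j e : ℕ} (h : j ≤ e) :
    ((p : ℚ) ^ j)⁻¹ ∈ zmultiples ((p : ℚ) ^ e)⁻¹ := by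
  refine mem_zmultiples_iff.2 ⟨(p : ℤ) ^ (e - j), ?_⟩
  rw [zsmul_eq_mul, ← Nat.sub_add_cancel h, pow_add]
  push_cast
  field_simp
  rw [Nat.add_sub_cancel]

lemma natCast_mem_zmultiples (hp : p ≠ 0) (n e : ℕ) : (n : ℚ) ∈ zmultiples ((p : ℚ) ^ e)⁻¹ := by
  simpa using nsmul_mem (inv_pow_mem_zmultiples hp (Nat.zero_le e)) n

lemma inv_pow_notMem_zmultiples (hp : 2 ≤ p) {j e : ℕ} (h : e < j) :
    ((p : ℚ) ^ j)⁻¹ ∉ zmultiples ((p : ℚ) ^ e)⁻¹ := by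
  intro hmem
  obtain ⟨k, hk⟩ := mem_zmultiples_iff.1 hmem
  have hunit : k * (p : ℤ) ^ (j - e) = 1 := by
    have hpq : (p : ℚ) ≠ 0 := by positivity
    rw [zsmul_eq_mul, ← Nat.sub_add_cancel h.le, pow_add] at hk
    field_simp at hk
    exact_mod_cast hk
  have := Int.eq_one_of_dvd_one (by positivity) (Dvd.intro_left k hunit)
  rw [← Nat.cast_pow, Nat.cast_eq_one, Nat.pow_eq_one] at this
  omega

lemma mem_zmultiples_iff_of_eq_atom (hq : q ≠ 0) {m e : ℕ} {g : ℚ}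
    (hg : g = atomA p m ∨ g = atomB p m) :
    g ∈ zmultiples ((q : ℚ) ^ e)⁻¹ ↔ ((p : ℚ) ^ m)⁻¹ ∈ zmultiples ((q : ℚ) ^ e)⁻¹ := by
  rcases hg with rfl | rfl
  · exact AddSubgroup.add_mem_cancel_left _ (natCast_mem_zmultiples hq m e)
  · rw [atomB, sub_eq_add_neg, ← Nat.cast_succ,
      AddSubgroup.add_mem_cancel_left _ (natCast_mem_zmultiples hq _ e), neg_mem_iff]

lemma mem_zmultiples_of_lt (hp : 2 ≤ p) {e : ℕ} {x : ℚ} (hx : x ∈ monoid p) (hlt : x < e + 1) :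
    x ∈ zmultiples ((p : ℚ) ^ e)⁻¹ := by
  have hp0 : p ≠ 0 := by omega
  induction hx using AddSubmonoid.closure_induction with
  | mem g hg =>
    rcases hg with rfl | ⟨m, hm, hg⟩
    · exact_mod_cast natCast_mem_zmultiples hp0 1 e
    · have hme : m < e + 1 := by
        exact_mod_cast (lt_and_lt_add_one_of_eq_atom hp hm hg).1.trans hlt
      exact (mem_zmultiples_iff_of_eq_atom hp0 hg).2 (inv_pow_mem_zmultiples hp0 (by omega))
  | zero => exact zero_mem _
  | add x y hx hy ihx ihy =>
    have := puiseux hp x hx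
    have := puiseux hp y hy
    exact add_mem (ihx (by linarith)) (ihy (by linarith))

lemma isAtom_of_mem_gens (hp : 2 ≤ p) {g : ℚ} (hg : g ∈ gens p) : PM.IsAtom (monoid p) g := by
  have hg1 := one_le_of_mem_gens hp hg
  refine ⟨AddSubmonoid.subset_closure hg, by positivity, fun x hx y hy hxy => ?_⟩
  by_contra! h
  have hx1 := (eq_zero_or_one_le_of_mem hp hx).resolve_left h.1
  have hy1 := (eq_zero_or_one_le_of_mem hp hy).resolve_left h.2
  rcases hg with rfl | ⟨m, hm, hg⟩
  · linarith
  obtain ⟨e, rfl⟩ : ∃ e, m = e + 1 := ⟨m - 1, by omega⟩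
  have hlt := (lt_and_lt_add_one_of_eq_atom hp hm hg).2
  push_cast at hlt
  have hmem : g ∈ zmultiples ((p : ℚ) ^ e)⁻¹ := hxy ▸
    add_mem (mem_zmultiples_of_lt hp hx (by linarith)) (mem_zmultiples_of_lt hp hy (by linarith))
  exact inv_pow_notMem_zmultiples hp e.lt_succ_self
    ((mem_zmultiples_iff_of_eq_atom (by omega) hg).1 hmem)

lemma atomic (hp : 2 ≤ p) : PM.Atomic (monoid p) :=
  PM.atomic_closure fun _ hg => isAtom_of_mem_gens hp hg

lemma infinite_U (hp : 2 ≤ p) {k : ℕ} (hk : 2 ≤ k) : (PM.U (monoid p) k).Infinite := by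
  have hatom {g : ℚ} (hg : g ∈ gens p) := isAtom_of_mem_gens hp hg
  refine Set.infinite_of_injective_forall_mem (f := fun m : ℕ => k - 2 + (2 * m + 3))
    (fun a b hab => by simp only at hab; omega) fun m => ?_
  refine PM.add_mem_U_of_atoms (a := atomA p (m + 1)) (b := atomB p (m + 1))
    (hatom (.inl rfl)) (hatom (.inr ⟨m + 1, by omega, .inl rfl⟩))
    (hatom (.inr ⟨m + 1, by omega, .inr rfl⟩)) ?_ hk
  simp only [atomA, atomB]
  push_cast
  ring

lemma dvd_pow_of_inv_mem_zmultiples (hp : p ≠ 0) (hq : q ≠ 0) {e : ℕ}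
    (h : (p : ℚ)⁻¹ ∈ zmultiples ((q : ℚ) ^ e)⁻¹) : p ∣ q ^ e := by
  obtain ⟨k, hk⟩ := mem_zmultiples_iff.1 h
  have hkp : k * p = (q : ℤ) ^ e := by
    rw [zsmul_eq_mul] at hk
    field_simp at hk
    exact_mod_cast hk
  exact Int.natCast_dvd_natCast.1 (by push_cast; exact Dvd.intro_left k hkp)

lemma eq_of_monoid_le (hp : p.Prime) (hq : q.Prime) (h : monoid p ≤ monoid q) : p = q := by
  have hA : atomA p 1 ∈ monoid q := h (AddSubmonoid.subset_closure (.inr ⟨1, le_rfl, .inl rfl⟩))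
  have hlt : atomA p 1 < (2 : ℕ) + 1 := by
    have := (lt_and_lt_add_one_of_eq_atom hp.two_le le_rfl (Or.inl rfl)).2
    push_cast at this ⊢
    linarith
  have hinv := (mem_zmultiples_iff_of_eq_atom hq.ne_zero (.inl rfl)).1
    (mem_zmultiples_of_lt hq.two_le hA hlt)
  rw [pow_one] at hinv
  exact (Nat.prime_dvd_prime_iff_eq hp hq).1
    (hp.dvd_of_dvd_pow (dvd_pow_of_inv_mem_zmultiples hp.ne_zero hq.ne_zero hinv))

lemma eq_of_addEquiv (hp : p.Prime) (hq : q.Prime) (e : monoid p ≃+ monoid q) : p = q :=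
  eq_of_monoid_le hp hq <| PM.le_of_addEquiv (fun _ => eq_zero_or_one_le_of_mem hp.two_le)
    (fun _ => eq_zero_or_one_le_of_mem hq.two_le) one_mem_monoid one_mem_monoid e

end PuiseuxExample

theorem stmt9 :
    ∃ F : ℕ → AddSubmonoid ℚ,
      (∀ n : ℕ, PM.Puiseux (F n) ∧ PM.Atomic (F n) ∧
        (∃ q : ℚ, 0 < q ∧ ∀ x ∈ F n, x ≠ 0 → q ≤ x) ∧
        ∀ k ≥ 2, (PM.U (F n) k).Infinite) ∧
      ∀ i j : ℕ, Nonempty ((F i) ≃+ (F j)) → i = j := by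
  refine ⟨fun n => PuiseuxExample.monoid (Nat.nth Nat.Prime n), fun n => ?_, fun i j ⟨e⟩ => ?_⟩
  · have hp := (Nat.prime_nth_prime n).two_le
    refine ⟨PuiseuxExample.puiseux hp, PuiseuxExample.atomic hp, ⟨1, one_pos, fun x hx hx0 => ?_⟩,
      fun k hk => PuiseuxExample.infinite_U hp hk⟩
    exact (PuiseuxExample.eq_zero_or_one_le_of_mem hp hx).resolve_left hx0
  · exact Nat.nth_injective Nat.infinite_setOfPred_prime <|
      PuiseuxExample.eq_of_addEquiv (Nat.prime_nth_prime i) (Nat.prime_nth_prime j) e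
end

section
/- Let P be a bounded primary Puiseux monoid with no stable atoms (i.e., for each m ∈ ℕ only finitely many atoms have numerator m). Then ρ_k(P) < ∞ for every k ∈ ℕ. -/
/-- `P` is a primary Puiseux monoid. -/
def PM.Primary (P : AddSubmonoid ℚ) : Prop :=
  ∃ A : Set ℚ, (∀ a ∈ A, 0 < a) ∧ AddSubmonoid.closure A = P ∧
    (∀ a ∈ A, (a.den).Prime) ∧
    ∀ a ∈ A, ∀ b ∈ A, a ≠ b → a.den ≠ b.den

/-! If `z` and `z'` are factorizations of the same element `x`, then comparing the coefficients
of an atom `a` modulo `a.den` gives `count a z' ≡ count a z [MOD a.den]`, since all other atoms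
have denominators coprime to `a.den`. Hence an atom occurring more often in `z'` than in `z`
satisfies `a.num = a.den * a ≤ count a z' * a ≤ x`. If `z` has length `k` and `M` bounds the
atoms, then `x ≤ k * M`; without stable atoms only finitely many atoms have numerator at most
`k * M`, so they are bounded below by some `δ > 0`, and at most `k * M / δ` of them fit into `z'`.
All other atoms occur in `z'` at most as often as in `z`, so `|z'| ≤ k + k * M / δ`. -/

lemma Rat.den_dvd_of_coprime_den_intCast_mul {n : ℤ} {a : ℚ}
    (h : Nat.Coprime ((n : ℚ) * a).den a.den) : (a.den : ℤ) ∣ n := by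
  have hint : ((n : ℚ) * a).den = 1 :=
    h.eq_one_of_dvd (by simpa using Rat.mul_den_dvd (n : ℚ) a)
  have hnum : ((((n : ℚ) * a).num * a.den : ℤ) : ℚ) = ((n * a.num : ℤ) : ℚ) := by
    push_cast
    rw [(Rat.den_eq_one_iff _).mp hint, mul_assoc, Rat.mul_den_eq_num]
  exact Int.dvd_of_dvd_mul_left_of_gcd_one (Dvd.intro_left _ (Int.cast_injective hnum))
    (by rw [Int.gcd_comm]; exact a.reduced)

lemma Multiset.coprime_den_sum {q : ℕ} {s : Multiset ℚ} (h : ∀ r ∈ s, Nat.Coprime r.den q) :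
    Nat.Coprime s.sum.den q := by
  induction s using Multiset.induction with
  | empty => simp
  | cons b t ih =>
    rw [Multiset.sum_cons]
    exact .coprime_dvd_left (Rat.add_den_dvd b t.sum)
      (.mul_left (h b (t.mem_cons_self b)) (ih fun r hr => h r (Multiset.mem_cons_of_mem hr)))

lemma Multiset.sum_le_sum_of_le {α : Type*} [AddCommMonoid α] [PartialOrder α]
    [IsOrderedAddMonoid α] {s t : Multiset α} (hst : s ≤ t) (ht : ∀ x ∈ t, 0 ≤ x) :
    s.sum ≤ t.sum := by
  obtain ⟨u, rfl⟩ := Multiset.le_iff_exists_add.mp hst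
  rw [Multiset.sum_add]
  exact le_add_of_nonneg_right
    (Multiset.sum_nonneg fun x hx => ht x (Multiset.mem_add.mpr (.inr hx)))

lemma Multiset.sum_eq_count_nsmul_add_sum_filter_ne {α : Type*} [AddCommMonoid α]
    [DecidableEq α] (s : Multiset α) (a : α) :
    s.sum = s.count a • a + (s.filter (· ≠ a)).sum := by
  conv_lhs => rw [← s.filter_add_not (· = a)]
  rw [Multiset.sum_add, Multiset.filter_eq', Multiset.sum_replicate]

lemma Set.Finite.exists_gt_forall_le {α : Type*} [LinearOrder α] [NoMaxOrder α] {s : Set α}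
    (hs : s.Finite) {b : α} (h : ∀ a ∈ s, b < a) :
    ∃ δ, b < δ ∧ ∀ a ∈ s, δ ≤ a := by
  obtain ⟨c, hc⟩ := exists_gt b
  obtain ⟨δ, hδ, hmin⟩ := Set.exists_min_image (insert c s) id (hs.insert c) ⟨c, by simp⟩
  refine ⟨δ, ?_, fun a ha => hmin a (Set.mem_insert_of_mem c ha)⟩
  rcases hδ with rfl | hδ
  exacts [hc, h δ hδ]

namespace PM

section CoprimeDenominators

variable {S : Set ℚ} {z z' : Multiset ℚ}

lemma count_sub_count_dvd_of_sum_eq (hS : S.Pairwise fun a b => Nat.Coprime a.den b.den)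
    (hz : ∀ b ∈ z, b ∈ S) (hz' : ∀ b ∈ z', b ∈ S) (hsum : z.sum = z'.sum) {a : ℚ}
    (ha : a ∈ S) :
    (a.den : ℤ) ∣ (z.count a : ℤ) - z'.count a := by
  have hrest : ∀ w : Multiset ℚ, (∀ b ∈ w, b ∈ S) →
      Nat.Coprime (w.filter (· ≠ a)).sum.den a.den := fun w hw =>
    Multiset.coprime_den_sum fun r hr =>
      hS (hw r (Multiset.mem_of_mem_filter hr)) ha (Multiset.mem_filter.mp hr).2
  apply Rat.den_dvd_of_coprime_den_intCast_mul
  have hdiff : (((z.count a : ℤ) - z'.count a : ℤ) : ℚ) * a =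
      (z'.filter (· ≠ a)).sum - (z.filter (· ≠ a)).sum := by
    rw [z.sum_eq_count_nsmul_add_sum_filter_ne a, z'.sum_eq_count_nsmul_add_sum_filter_ne a,
      nsmul_eq_mul, nsmul_eq_mul] at hsum
    push_cast
    linarith
  rw [hdiff]
  exact .coprime_dvd_left (Rat.sub_den_dvd _ _) (.mul_left (hrest z' hz') (hrest z hz))

lemma count_le_count_of_sum_lt_num (hS : S.Pairwise fun a b => Nat.Coprime a.den b.den)
    (hnonneg : ∀ a ∈ S, 0 ≤ a) (hz : ∀ b ∈ z, b ∈ S) (hz' : ∀ b ∈ z', b ∈ S)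
    (hsum : z.sum = z'.sum) {a : ℚ} (ha : z.sum < a.num) : z'.count a ≤ z.count a := by
  by_contra! hlt
  have haS : a ∈ S := hz' a (Multiset.count_pos.mp (by omega))
  have hden : (a.den : ℚ) ≤ z'.count a := by
    have := Int.le_of_dvd (by omega) (count_sub_count_dvd_of_sum_eq hS hz' hz hsum.symm haS)
    exact_mod_cast (by omega : (a.den : ℤ) ≤ z'.count a)
  have hnum : (a.num : ℚ) ≤ z.sum := calc
    (a.num : ℚ) = a.den * a := (Rat.den_mul_eq_num a).symm
    _ ≤ z'.count a * a := by gcongr; exact hnonneg a haS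
    _ = (z'.filter (· = a)).sum := by
      rw [Multiset.filter_eq', Multiset.sum_replicate, nsmul_eq_mul]
    _ ≤ z'.sum := Multiset.sum_le_sum_of_le (Multiset.filter_le _ _)
      fun x hx => hnonneg x (hz' x hx)
    _ = z.sum := hsum.symm
  linarith

lemma card_le_card_add_floor_sum_div (hS : S.Pairwise fun a b => Nat.Coprime a.den b.den)
    (hnonneg : ∀ a ∈ S, 0 ≤ a) (hz : ∀ b ∈ z, b ∈ S) (hz' : ∀ b ∈ z', b ∈ S)
    (hsum : z.sum = z'.sum) {δ : ℚ} (hδ : 0 < δ)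
    (hδle : ∀ a ∈ S, (a.num : ℚ) ≤ z.sum → δ ≤ a) :
    Multiset.card z' ≤ Multiset.card z + ⌊z.sum / δ⌋₊ := by
  set small : ℚ → Prop := fun a => (a.num : ℚ) ≤ z.sum
  have hlarge : Multiset.card (z'.filter (¬ small ·)) ≤ Multiset.card z := by
    refine (Multiset.card_le_card (Multiset.le_iff_count.mpr fun a => ?_)).trans
      (Multiset.card_le_card (Multiset.filter_le (¬ small ·) z))
    by_cases h : small a
    · rw [Multiset.count_filter_of_neg (p := (¬ small ·)) (not_not_intro h)]
      exact Nat.zero_le _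
    · rw [Multiset.count_filter_of_pos (p := (¬ small ·)) h,
        Multiset.count_filter_of_pos (p := (¬ small ·)) h]
      exact count_le_count_of_sum_lt_num hS hnonneg hz hz' hsum (not_le.mp h)
  have hsmall : Multiset.card (z'.filter small) ≤ ⌊z.sum / δ⌋₊ := by
    refine Nat.le_floor ((le_div_iff₀ hδ).mpr ?_)
    calc (Multiset.card (z'.filter small) : ℚ) * δ = Multiset.card (z'.filter small) • δ :=
          (nsmul_eq_mul _ _).symm
      _ ≤ (z'.filter small).sum := Multiset.card_nsmul_le_sum fun a ha =>
          hδle a (hz' a (Multiset.mem_of_mem_filter ha)) (Multiset.mem_filter.mp ha).2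
      _ ≤ z'.sum := Multiset.sum_le_sum_of_le (Multiset.filter_le _ _)
          fun x hx => hnonneg x (hz' x hx)
      _ = z.sum := hsum.symm
  rw [← z'.filter_add_not small, Multiset.card_add]
  omega

end CoprimeDenominators

lemma mem_of_isAtom_closure {A : Set ℚ} (h0 : (0 : ℚ) ∉ A) {a : ℚ}
    (ha : IsAtom (AddSubmonoid.closure A) a) : a ∈ A := by
  obtain ⟨haP, hane, hirr⟩ := ha
  obtain ⟨m, hm, rfl⟩ := AddSubmonoid.exists_multiset_of_mem_closure haP
  obtain ⟨b, hb⟩ := m.exists_mem_of_ne_zero fun h => hane (by rw [h, Multiset.sum_zero])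
  have hsplit : m.sum = b + (m.erase b).sum := by rw [← Multiset.sum_cons, Multiset.cons_erase hb]
  have hrest : (m.erase b).sum ∈ AddSubmonoid.closure A :=
    AddSubmonoid.multiset_sum_mem _ _ fun y hy =>
      AddSubmonoid.subset_closure (hm y (Multiset.mem_of_mem_erase hy))
  rcases hirr b (AddSubmonoid.subset_closure (hm b hb)) _ hrest hsplit with h | h
  · exact absurd (h ▸ hm b hb) h0
  · rw [hsplit, h, add_zero]
    exact hm b hb

lemma Primary.pos_of_isAtom {P : AddSubmonoid ℚ} (hP : Primary P) {a : ℚ} (ha : IsAtom P a) :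
    0 < a := by
  obtain ⟨A, hpos, rfl, -, -⟩ := hP
  exact hpos a (mem_of_isAtom_closure (fun h0 => (hpos 0 h0).false) ha)

lemma Primary.pairwise_coprime_den {P : AddSubmonoid ℚ} (hP : Primary P) :
    {a | IsAtom P a}.Pairwise fun a b => Nat.Coprime a.den b.den := by
  obtain ⟨A, hpos, rfl, hprime, hden⟩ := hP
  have hA : ∀ a, IsAtom (AddSubmonoid.closure A) a → a ∈ A :=
    fun a => mem_of_isAtom_closure fun h0 => (hpos 0 h0).false
  intro a ha b hb hab
  exact (Nat.coprime_primes (hprime a (hA a ha)) (hprime b (hA b hb))).mpr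
    (hden a (hA a ha) b (hA b hb) hab)

lemma finite_setOf_isAtom_num_le {P : AddSubmonoid ℚ} (hpos : ∀ a, IsAtom P a → 0 < a)
    (hfin : ∀ m : ℤ, {a | IsAtom P a ∧ a.num = m}.Finite) (B : ℚ) :
    {a | IsAtom P a ∧ (a.num : ℚ) ≤ B}.Finite := by
  refine ((Set.finite_Icc 1 ⌊B⌋).biUnion fun m _ => hfin m).subset ?_
  rintro a ⟨ha, hB⟩
  exact Set.mem_biUnion (Set.mem_Icc.mpr ⟨Rat.num_pos.mpr (hpos a ha), Int.le_floor.mpr hB⟩)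
    ⟨ha, rfl⟩

end PM

theorem stmt14 (P : AddSubmonoid ℚ) (hprim : PM.Primary P)
    (hbdd : BddAbove {a : ℚ | PM.IsAtom P a})
    (hnostable : ∀ m : ℤ, {a : ℚ | PM.IsAtom P a ∧ a.num = m}.Finite) :
    ∀ k : ℕ, (PM.U P k).Finite := by
  intro k
  obtain ⟨M, hM⟩ := hbdd
  have hpos : ∀ a, PM.IsAtom P a → 0 < a := fun a => hprim.pos_of_isAtom
  obtain ⟨δ, hδ, hδle⟩ :=
    (PM.finite_setOf_isAtom_num_le hpos hnostable (k * M)).exists_gt_forall_le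
      fun a ha => hpos a ha.1
  refine (Set.finite_Iic (k + ⌊k * M / δ⌋₊)).subset ?_
  rintro l ⟨x, -, ⟨z, ⟨hz, rfl⟩, rfl⟩, ⟨z', ⟨hz', hsum⟩, rfl⟩⟩
  have hx : z.sum ≤ Multiset.card z * M := by
    simpa using Multiset.sum_le_card_nsmul z M fun a ha => hM (hz a ha)
  calc Multiset.card z' ≤ Multiset.card z + ⌊z.sum / δ⌋₊ :=
        PM.card_le_card_add_floor_sum_div hprim.pairwise_coprime_den (fun a ha => (hpos a ha).le)
          hz hz' hsum.symm hδ fun a ha hnum => hδle a ⟨ha, hnum.trans hx⟩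
    _ ≤ Multiset.card z + ⌊Multiset.card z * M / δ⌋₊ := by gcongr
end
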